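/- The projection formula via CDF transform holds: if u has continuous strictly increasing CDF F and ξ has continuous strictly increasing CDF G, then E[u·Φ_k(ξ̃)] = ∫₀¹ F⁻¹(θ) Φ_k(G⁻¹(θ)) dθ, where ξ̃ = G⁻¹(F(u)). -/

import Mathlib

/-!
Since `F` is continuous and strictly increasing, `F(u)` is uniformly distributed on `(0,1)`
(probability integral transform) and `u = F⁻¹(F(u))`. Hence the integrand on the left is
`h(F(u))` for `h θ = F⁻¹(θ) Φ(G⁻¹(θ))`, whose expectation is the integral of `h` over `(0,1)`.
-/

open MeasureTheory ProbabilityTheory Set Function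

namespace ProbabilityTheory

variable {μ : Measure ℝ}

lemma cdf_mem_Ioo_of_strictMono (hm : StrictMono (cdf μ)) (x : ℝ) : cdf μ x ∈ Ioo 0 1 :=
  ⟨(cdf_nonneg μ (x - 1)).trans_lt (hm (sub_one_lt x)),
    (hm (lt_add_one x)).trans_le (cdf_le_one μ (x + 1))⟩

lemma Ioo_subset_range_cdf (hc : Continuous (cdf μ)) : Ioo 0 1 ⊆ range (cdf μ) := fun _ ht =>
  mem_range_of_exists_le_of_exists_ge hc
    ((tendsto_cdf_atBot μ).eventually (eventually_le_nhds ht.1)).exists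
    ((tendsto_cdf_atTop μ).eventually (eventually_ge_nhds ht.2)).exists

theorem map_cdf_eq_volume_restrict_Ioo [IsProbabilityMeasure μ] (hc : Continuous (cdf μ))
    (hm : StrictMono (cdf μ)) : μ.map (cdf μ) = volume.restrict (Ioo 0 1) := by
  refine Measure.ext_of_Iic _ _ fun t => ?_
  rw [Measure.map_apply hc.measurable measurableSet_Iic, Measure.restrict_apply measurableSet_Iic]
  have hIoo := cdf_mem_Ioo_of_strictMono hm
  rcases le_or_gt t 0 with ht0 | ht0
  · have hF : cdf μ ⁻¹' Iic t = ∅ :=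
      eq_empty_of_forall_notMem fun x hx => (ht0.trans_lt (hIoo x).1).not_ge hx
    have hI : Iic t ∩ Ioo 0 1 = ∅ :=
      eq_empty_of_forall_notMem fun x hx => (hx.1.trans ht0).not_gt hx.2.1
    simp [hF, hI]
  rcases le_or_gt 1 t with ht1 | ht1
  · have hF : cdf μ ⁻¹' Iic t = univ :=
      eq_univ_of_forall fun x => ((hIoo x).2.trans_le ht1).le
    have hI : Iic t ∩ Ioo 0 1 = Ioo 0 1 :=
      inter_eq_self_of_subset_right fun x hx => (hx.2.trans_le ht1).le
    simp [hF, hI]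
  obtain ⟨x, rfl⟩ := Ioo_subset_range_cdf hc ⟨ht0, ht1⟩
  have hI : Iic (cdf μ x) ∩ Ioo 0 1 = Ioc 0 (cdf μ x) := by
    ext y; simp only [mem_inter_iff, mem_Iic, mem_Ioo, mem_Ioc]; grind
  have hF : cdf μ ⁻¹' Iic (cdf μ x) = Iic x := ext fun y => hm.le_iff_le
  rw [hF, hI, Real.volume_Ioc, sub_zero, ofReal_cdf]

lemma cdf_map_eq_toReal {Ω : Type*} [MeasurableSpace Ω] (P : Measure Ω) [IsProbabilityMeasure P]
    {X : Ω → ℝ} (hX : Measurable X) (t : ℝ) : cdf (P.map X) t = (P {ω | X ω ≤ t}).toReal := by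
  have := Measure.isProbabilityMeasure_map (μ := P) hX.aemeasurable
  rw [cdf_eq_real, measureReal_def, Measure.map_apply hX measurableSet_Iic]
  rfl

theorem integral_comp_cdf_map {Ω E : Type*} [MeasurableSpace Ω] [NormedAddCommGroup E]
    [NormedSpace ℝ E] {P : Measure Ω} [IsProbabilityMeasure P] {X : Ω → ℝ} (hX : Measurable X)
    (hc : Continuous (cdf (P.map X))) (hm : StrictMono (cdf (P.map X))) {g : ℝ → E}
    (hg : AEStronglyMeasurable g (volume.restrict (Ioo 0 1))) :
    ∫ ω, g (cdf (P.map X) (X ω)) ∂P = ∫ θ in Ioo 0 1, g θ := by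
  have := Measure.isProbabilityMeasure_map (μ := P) hX.aemeasurable
  have hmap : P.map (cdf (P.map X) ∘ X) = volume.restrict (Ioo 0 1) := by
    rw [← Measure.map_map hc.measurable hX, map_cdf_eq_volume_restrict_Ioo hc hm]
  rw [← hmap, integral_map (hc.measurable.comp hX).aemeasurable (hmap ▸ hg)]
  rfl

end ProbabilityTheory

theorem stmt7_general
    {Ω : Type*} [MeasurableSpace Ω] (P : Measure Ω) [IsProbabilityMeasure P]
    (u : Ω → ℝ) (hu : Measurable u)
    (F G : ℝ → ℝ)
    (hF : ∀ t, F t = (P {ω | u ω ≤ t}).toReal)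
    (hFc : Continuous F) (hFm : StrictMono F)
    (Φ : Polynomial ℝ)
    (hint : IntegrableOn
      (fun θ => Function.invFun F θ * Φ.eval (Function.invFun G θ)) (Set.Ioo (0 : ℝ) 1)) :
    ∫ ω, u ω * Φ.eval (Function.invFun G (F (u ω))) ∂P
      = ∫ θ in Set.Ioo (0 : ℝ) 1, Function.invFun F θ * Φ.eval (Function.invFun G θ) := by
  have hF_cdf : F = cdf (P.map u) := funext fun t => (hF t).trans (cdf_map_eq_toReal P hu t).symm
  subst hF_cdf
  rw [← integral_comp_cdf_map hu hFc hFm hint.aestronglyMeasurable]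
  simp only [leftInverse_invFun hFm.injective _]

/-- Projection formula via CDF transform: if `u` has continuous strictly increasing CDF `F`
and `G` is the continuous strictly increasing CDF of a random variable `ξ`, then
`E[u·Φ_k(ξ̃)] = ∫₀¹ F⁻¹(θ) Φ_k(G⁻¹(θ)) dθ`, where `ξ̃ = G⁻¹(F(u))`. -/
theorem stmt7
    {Ω : Type*} [MeasurableSpace Ω] (P : Measure Ω) [IsProbabilityMeasure P]
    (u ξ : Ω → ℝ) (hu : Measurable u) (hξ : Measurable ξ)
    (hu_int : Integrable u P)
    (F G : ℝ → ℝ)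
    (hF : ∀ t, F t = (P {ω | u ω ≤ t}).toReal)
    (hG : ∀ t, G t = (P {ω | ξ ω ≤ t}).toReal)
    (hFc : Continuous F) (hFm : StrictMono F)
    (hGc : Continuous G) (hGm : StrictMono G)
    (Φ : Polynomial ℝ)
    (hint : IntegrableOn
      (fun θ => Function.invFun F θ * Φ.eval (Function.invFun G θ)) (Set.Ioo (0 : ℝ) 1))
    (hlhs : Integrable (fun ω => u ω * Φ.eval (Function.invFun G (F (u ω)))) P) :
    ∫ ω, u ω * Φ.eval (Function.invFun G (F (u ω))) ∂P
      = ∫ θ in Set.Ioo (0 : ℝ) 1, Function.invFun F θ * Φ.eval (Function.invFun G θ) :=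
  stmt7_general P u hu F G hF hFc hFm Φ hint
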